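/- Let U ⊆ ℂⁿ be open, let r : U → ℝ be of class C² with L_r(z;X) > 0 for every z ∈ U and every nonzero X ∈ ℂⁿ, and let K ⊆ U be compact. Then there exist constants C > 0 and λ > 0 such that for every ζ ∈ K with r(ζ) = 0 and every z ∈ U with r(z) ≤ 0 and ‖z−ζ‖ < λ, one has Re P_r(z;ζ) ≥ (C/2)‖z−ζ‖². -/

import Mathlib

/-! With `h = z - ζ`, a direct computation with the real derivatives of `r` at `ζ` gives
`2 Re P_r(z;ζ) = Re L_r(ζ;h) - (Dr(ζ) h + D²r(ζ)(h,h) / 2)`, and by Taylor's formula the bracket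
is `r z - r ζ` up to `ε ‖h‖²`, where `ε` bounds `‖D²r(w) - D²r(ζ)‖` for `‖w - ζ‖ ≤ ‖h‖`.
By compactness of `K` the Levi form is bounded below by `c ‖h‖²` there and `D²r` is uniformly
continuous near `K`; taking `ε = c / 2`, the hypotheses `r ζ = 0 ≥ r z` leave
`2 Re P_r(z;ζ) ≥ (c / 2) ‖h‖²`. -/

open Complex Metric Set Function

noncomputable section

/-- Directional Wirtinger derivative `∂_v f(z) = (1/2)(Df(z)v − i·Df(z)(i·v))`.
For `v = e_j` this is the Wirtinger derivative `∂f/∂z_j(z)`; in coordinates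
`∂_v = Σ_j v_j ∂/∂z_j`. -/
def wDeriv {F : Type*} [NormedAddCommGroup F] [NormedSpace ℂ F]
    (f : F → ℂ) (v : F) (z : F) : ℂ :=
  (1 / 2) * (fderiv ℝ f z v - Complex.I * fderiv ℝ f z (Complex.I • v))

/-- Directional conjugate Wirtinger derivative `∂̄_v f(z) = (1/2)(Df(z)v + i·Df(z)(i·v))`;
in coordinates `∂̄_v = Σ_k (conj v_k) ∂/∂z̄_k`. -/
def wDerivBar {F : Type*} [NormedAddCommGroup F] [NormedSpace ℂ F]
    (f : F → ℂ) (v : F) (z : F) : ℂ :=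
  (1 / 2) * (fderiv ℝ f z v + Complex.I * fderiv ℝ f z (Complex.I • v))

/-- The Levi form `L_r(z;X) = Σ_{j,k} ∂²r/∂z_j∂z̄_k(z) X_j (conj X_k)` of a real-valued
function, written via directional Wirtinger derivatives. -/
def leviForm {F : Type*} [NormedAddCommGroup F] [NormedSpace ℂ F]
    (r : F → ℝ) (z X : F) : ℂ :=
  wDerivBar (fun w => wDeriv (fun y => (r y : ℂ)) X w) X z

/-- The Levi polynomial
`P_r(z;ζ) = −Σ_j ∂r/∂z_j(ζ)(z_j−ζ_j) − (1/2) Σ_{i,j} ∂²r/∂z_i∂z_j(ζ)(z_i−ζ_i)(z_j−ζ_j)`. -/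
def leviPolynomial {F : Type*} [NormedAddCommGroup F] [NormedSpace ℂ F]
    (r : F → ℝ) (ζ z : F) : ℂ :=
  - wDeriv (fun y => (r y : ℂ)) (z - ζ) ζ
  - (1 / 2) * wDeriv (fun w => wDeriv (fun y => (r y : ℂ)) (z - ζ) w) (z - ζ) ζ

open Topology

section Wirtinger

variable {F : Type*} [NormedAddCommGroup F] [NormedSpace ℂ F]

theorem HasFDerivAt.ofReal_comp {f : F → ℝ} {f' : F →L[ℝ] ℝ} {z : F} (hf : HasFDerivAt f f' z) :
    HasFDerivAt (fun y => (f y : ℂ)) (ofRealCLM.comp f') z :=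
  ofRealCLM.hasFDerivAt.comp z hf

theorem wDeriv_eq_of_hasFDerivAt {f : F → ℂ} {L : F →L[ℝ] ℂ} {z : F} (hf : HasFDerivAt f L z)
    (v : F) : wDeriv f v z = (1 / 2) * (L v - I * L (I • v)) := by
  rw [wDeriv, hf.fderiv]

theorem wDerivBar_eq_of_hasFDerivAt {f : F → ℂ} {L : F →L[ℝ] ℂ} {z : F} (hf : HasFDerivAt f L z)
    (v : F) : wDerivBar f v z = (1 / 2) * (L v + I * L (I • v)) := by
  rw [wDerivBar, hf.fderiv]

variable {r : F → ℝ} {ζ : F} {M : F →L[ℝ] F →L[ℝ] ℝ}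

theorem wDeriv_ofReal {z : F} (hr : DifferentiableAt ℝ r z) (X : F) :
    wDeriv (fun y => (r y : ℂ)) X z
      = (1 / 2) * ((fderiv ℝ r z X : ℂ) - I * (fderiv ℝ r z (I • X) : ℂ)) := by
  simp [wDeriv_eq_of_hasFDerivAt hr.hasFDerivAt.ofReal_comp]

theorem hasFDerivAt_wDeriv_ofReal (hr : ∀ᶠ w in 𝓝 ζ, DifferentiableAt ℝ r w)
    (hM : HasFDerivAt (fderiv ℝ r) M ζ) (X : F) :
    HasFDerivAt (fun w => wDeriv (fun y => (r y : ℂ)) X w)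
      ((1 / 2 : ℂ) • (ofRealCLM.comp (M.flip X) - I • ofRealCLM.comp (M.flip (I • X)))) ζ := by
  have hM_apply (v : F) :
      HasFDerivAt (fun w => (fderiv ℝ r w v : ℂ)) (ofRealCLM.comp (M.flip v)) ζ :=
    HasFDerivAt.ofReal_comp (by simpa using hM.clm_apply (hasFDerivAt_const v ζ))
  refine (((hM_apply X).sub ((hM_apply (I • X)).const_mul I)).const_mul
    (1 / 2 : ℂ)).congr_of_eventuallyEq ?_
  filter_upwards [hr] with w hw
  exact wDeriv_ofReal hw X

theorem re_leviForm_eq (hr : ∀ᶠ w in 𝓝 ζ, DifferentiableAt ℝ r w)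
    (hM : HasFDerivAt (fderiv ℝ r) M ζ) (X : F) :
    (leviForm r ζ X).re = (M X X + M (I • X) (I • X)) / 4 := by
  rw [leviForm, wDerivBar_eq_of_hasFDerivAt (hasFDerivAt_wDeriv_ofReal hr hM X)]
  simp only [smul_apply, sub_apply, ContinuousLinearMap.comp_apply,
    ContinuousLinearMap.flip_apply, ofRealCLM_apply, smul_eq_mul, add_re, sub_re, mul_re, mul_im,
    sub_im, ofReal_re, ofReal_im, I_re, I_im, div_ofNat_re, div_ofNat_im, one_re, one_im]
  ring

theorem two_mul_re_leviPolynomial (hr : ∀ᶠ w in 𝓝 ζ, DifferentiableAt ℝ r w)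
    (hM : HasFDerivAt (fderiv ℝ r) M ζ) (z : F) :
    2 * (leviPolynomial r ζ z).re
      = (leviForm r ζ (z - ζ)).re - (fderiv ℝ r ζ (z - ζ) + M (z - ζ) (z - ζ) / 2) := by
  rw [re_leviForm_eq hr hM, leviPolynomial,
    wDeriv_eq_of_hasFDerivAt (hasFDerivAt_wDeriv_ofReal hr hM (z - ζ)),
    wDeriv_ofReal hr.self_of_nhds]
  simp only [smul_apply, sub_apply, map_sub, ContinuousLinearMap.comp_apply,
    ContinuousLinearMap.flip_apply, ofRealCLM_apply, smul_eq_mul, neg_re, sub_re, mul_re, mul_im,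
    sub_im, ofReal_re, ofReal_im, I_re, I_im, div_ofNat_re, div_ofNat_im, one_re, one_im]
  ring

end Wirtinger

section SecondDerivative

variable {E G : Type*} [NormedAddCommGroup E] [NormedSpace ℝ E] [NormedAddCommGroup G]
  [NormedSpace ℝ G] {f : E → G} {U : Set E} {x : E}

theorem ContDiffOn.hasFDerivAt_of_isOpen (hf : ContDiffOn ℝ 2 f U) (hU : IsOpen U) (hx : x ∈ U) :
    HasFDerivAt f (fderiv ℝ f x) x :=
  ((hf.differentiableOn two_ne_zero).differentiableAt (hU.mem_nhds hx)).hasFDerivAt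

theorem ContDiffOn.hasFDerivAt_fderiv_of_isOpen (hf : ContDiffOn ℝ 2 f U) (hU : IsOpen U)
    (hx : x ∈ U) : HasFDerivAt (fderiv ℝ f) (fderiv ℝ (fderiv ℝ f) x) x :=
  (((hf.fderiv_of_isOpen hU (by norm_num) : ContDiffOn ℝ 1 _ U).differentiableOn
    one_ne_zero).differentiableAt (hU.mem_nhds hx)).hasFDerivAt

theorem ContDiffOn.continuousOn_fderiv_fderiv_of_isOpen (hf : ContDiffOn ℝ 2 f U)
    (hU : IsOpen U) : ContinuousOn (fderiv ℝ (fderiv ℝ f)) U :=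
  (hf.fderiv_of_isOpen hU (by norm_num) : ContDiffOn ℝ 1 _ U).continuousOn_fderiv_of_isOpen hU
    le_rfl

end SecondDerivative

section LeviFormC2

variable {F : Type*} [NormedAddCommGroup F] [NormedSpace ℂ F] {r : F → ℝ} {U : Set F} {ζ : F}

theorem ContDiffOn.eventually_differentiableAt (hr : ContDiffOn ℝ 2 r U) (hU : IsOpen U)
    (hζ : ζ ∈ U) : ∀ᶠ w in 𝓝 ζ, DifferentiableAt ℝ r w :=
  (hU.eventually_mem hζ).mono fun _ hw => (hr.hasFDerivAt_of_isOpen hU hw).differentiableAt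

theorem ContDiffOn.re_leviForm (hr : ContDiffOn ℝ 2 r U) (hU : IsOpen U) (hζ : ζ ∈ U) (X : F) :
    (leviForm r ζ X).re
      = (fderiv ℝ (fderiv ℝ r) ζ X X + fderiv ℝ (fderiv ℝ r) ζ (I • X) (I • X)) / 4 :=
  re_leviForm_eq (hr.eventually_differentiableAt hU hζ)
    (hr.hasFDerivAt_fderiv_of_isOpen hU hζ) X

theorem ContDiffOn.re_leviForm_real_smul (hr : ContDiffOn ℝ 2 r U) (hU : IsOpen U) (hζ : ζ ∈ U)
    (t : ℝ) (X : F) : (leviForm r ζ (t • X)).re = t ^ 2 * (leviForm r ζ X).re := by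
  simp only [hr.re_leviForm hU hζ, smul_comm I t X, map_smul, smul_apply, smul_eq_mul]
  ring

theorem ContDiffOn.continuousOn_re_leviForm (hr : ContDiffOn ℝ 2 r U) (hU : IsOpen U) :
    ContinuousOn (uncurry fun z X => (leviForm r z X).re) (U ×ˢ univ) := by
  have hB : ContinuousOn (fun p : F × F => fderiv ℝ (fderiv ℝ r) p.1) (U ×ˢ univ) :=
    (hr.continuousOn_fderiv_fderiv_of_isOpen hU).comp continuousOn_fst fun p hp => hp.1
  have hI : ContinuousOn (fun p : F × F => I • p.2) (U ×ˢ univ) :=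
    (continuous_snd.const_smul I).continuousOn
  refine ContinuousOn.congr ?_ fun p hp => hr.re_leviForm hU hp.1 p.2
  exact (((hB.clm_apply continuousOn_snd).clm_apply continuousOn_snd).add
    ((hB.clm_apply hI).clm_apply hI)).div_const 4

end LeviFormC2

section Taylor

variable {E G : Type*} [NormedAddCommGroup E] [NormedSpace ℝ E] [NormedAddCommGroup G]
  [NormedSpace ℝ G]

theorem hasFDerivAt_half_smul_apply_sub_sub {B : E →L[ℝ] E →L[ℝ] G} (hB : ∀ u v, B u v = B v u)
    (x w : E) : HasFDerivAt (fun y => (1 / 2 : ℝ) • B (y - x) (y - x)) (B (w - x)) w := by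
  have hsub : HasFDerivAt (fun y => y - x) (ContinuousLinearMap.id ℝ E) w :=
    (hasFDerivAt_id w).sub_const x
  have hB_sub : HasFDerivAt (fun y => B (y - x)) B w :=
    (B.hasFDerivAt.comp w hsub).congr_fderiv B.comp_id
  refine ((hB_sub.clm_apply hsub).const_smul (1 / 2 : ℝ)).congr_fderiv ?_
  ext v
  simp only [smul_apply, add_apply,
    ContinuousLinearMap.comp_id, ContinuousLinearMap.flip_apply, hB v (w - x)]
  module

theorem norm_sub_taylor_two_le {f : E → G} {f' : E → E →L[ℝ] G} {f'' : E → E →L[ℝ] E →L[ℝ] G}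
    {x y : E} {ε : ℝ}
    (hf : ∀ w ∈ closedBall x ‖y - x‖, HasFDerivAt f (f' w) w)
    (hf' : ∀ w ∈ closedBall x ‖y - x‖, HasFDerivAt f' (f'' w) w)
    (hsymm : ∀ u v, f'' x u v = f'' x v u)
    (hε : ∀ w ∈ closedBall x ‖y - x‖, ‖f'' w - f'' x‖ ≤ ε) :
    ‖f y - f x - f' x (y - x) - (1 / 2 : ℝ) • f'' x (y - x) (y - x)‖ ≤ ε * ‖y - x‖ ^ 2 := by
  have hx : x ∈ closedBall x ‖y - x‖ := mem_closedBall_self (norm_nonneg _)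
  have hy : y ∈ closedBall x ‖y - x‖ := by simp [dist_eq_norm]
  have hε₀ : 0 ≤ ε := (norm_nonneg (f'' x - f'' x)).trans (hε x hx)
  have hf'_lin : ∀ w ∈ closedBall x ‖y - x‖,
      ‖f' w - f' x - f'' x (w - x)‖ ≤ ε * ‖y - x‖ := fun w hw =>
    ((convex_closedBall x _).norm_image_sub_le_of_norm_hasFDerivWithin_le'
      (fun v hv => (hf' v hv).hasFDerivWithinAt) hε hx hw).trans
      (mul_le_mul_of_nonneg_left (by simpa [dist_eq_norm] using hw) hε₀)
  have hg : ∀ w ∈ closedBall x ‖y - x‖, HasFDerivWithinAt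
      (fun y => f y - (1 / 2 : ℝ) • f'' x (y - x) (y - x)) (f' w - f'' x (w - x))
      (closedBall x ‖y - x‖) w := fun w hw =>
    ((hf w hw).sub (hasFDerivAt_half_smul_apply_sub_sub hsymm x w)).hasFDerivWithinAt
  have := (convex_closedBall x _).norm_image_sub_le_of_norm_hasFDerivWithin_le' hg
    (fun w hw => by simpa only [sub_right_comm] using hf'_lin w hw) hx hy
  simp only [sub_self, map_zero, smul_zero, sub_zero] at this
  rw [sq, ← mul_assoc]
  convert this using 2
  abel

end Taylor

theorem IsCompact.exists_pos_forall_mul_sq_le {α E : Type*} [TopologicalSpace α]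
    [NormedAddCommGroup E] [NormedSpace ℝ E] [ProperSpace E] {K : Set α} (hK : IsCompact K)
    {Q : α → E → ℝ} (hQ : ContinuousOn (uncurry Q) (K ×ˢ sphere 0 1))
    (hhom : ∀ a ∈ K, ∀ (t : ℝ) X, Q a (t • X) = t ^ 2 * Q a X)
    (hpos : ∀ a ∈ K, ∀ X ≠ 0, 0 < Q a X) :
    ∃ c > 0, ∀ a ∈ K, ∀ X, c * ‖X‖ ^ 2 ≤ Q a X := by
  obtain ⟨c, hc, hcQ⟩ := (hK.prod (isCompact_sphere 0 1)).exists_forall_le' hQ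
    fun p hp => hpos p.1 hp.1 p.2 (ne_zero_of_mem_sphere one_ne_zero ⟨p.2, hp.2⟩)
  refine ⟨c, hc, fun a ha X => ?_⟩
  rcases eq_or_ne X 0 with rfl | hX
  · simpa using (hhom a ha 0 0).ge
  have hX₀ : 0 < ‖X‖ := norm_pos_iff.2 hX
  calc c * ‖X‖ ^ 2 ≤ Q a (‖X‖⁻¹ • X) * ‖X‖ ^ 2 :=
        by gcongr; exact hcQ (a, _) ⟨ha, by simp [norm_smul, hX₀.ne']⟩
    _ = Q a X := by rw [hhom a ha]; field_simp

theorem IsCompact.exists_pos_forall_ball_subset_norm_sub_lt {α β : Type*} [PseudoMetricSpace α]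
    [SeminormedAddCommGroup β] {K U : Set α} (hK : IsCompact K) (hU : IsOpen U) (hKU : K ⊆ U)
    {f : α → β} (hf : ContinuousOn f U) {ε : ℝ} (hε : 0 < ε) :
    ∃ δ > 0, ∀ x ∈ K, ball x δ ⊆ U ∧ ∀ y ∈ ball x δ, ‖f y - f x‖ < ε := by
  obtain ⟨δ₁, hδ₁, hδ₁U⟩ := hK.exists_thickening_subset_open hU hKU
  obtain ⟨δ₂, hδ₂, hδ₂f⟩ := mem_uniformity_dist.1 <| hK.uniformContinuousAt_of_continuousAt f
    (fun x hx => hf.continuousAt (hU.mem_nhds (hKU hx))) (dist_mem_uniformity hε)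
  refine ⟨min δ₁ δ₂, lt_min hδ₁ hδ₂, fun x hx => ⟨?_, fun y hy => ?_⟩⟩
  · exact (ball_subset_ball (min_le_left _ _)).trans ((ball_subset_thickening hx _).trans hδ₁U)
  · rw [← dist_eq_norm']
    exact hδ₂f ((mem_ball'.1 hy).trans_le (min_le_right _ _)) hx

/-- Let `U ⊆ ℂⁿ` be open, `r : U → ℝ` of class `C²` with everywhere
positive definite Levi form, and `K ⊆ U` compact. Then there are constants `C > 0` and
`λ > 0` such that for every `ζ ∈ K` with `r ζ = 0` and every `z ∈ U` with `r z ≤ 0` and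
`‖z − ζ‖ < λ` one has `Re P_r(z;ζ) ≥ (C/2) ‖z−ζ‖²`. -/
theorem statement_5 {n : ℕ} (U : Set (EuclideanSpace ℂ (Fin n))) (hU : IsOpen U)
    (r : EuclideanSpace ℂ (Fin n) → ℝ) (hr : ContDiffOn ℝ 2 r U)
    (hLevi : ∀ z ∈ U, ∀ X : EuclideanSpace ℂ (Fin n), X ≠ 0 → 0 < (leviForm r z X).re)
    (K : Set (EuclideanSpace ℂ (Fin n))) (hK : IsCompact K) (hKU : K ⊆ U) :
    ∃ C > (0 : ℝ), ∃ lam > (0 : ℝ), ∀ ζ ∈ K, r ζ = 0 →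
      ∀ z ∈ U, r z ≤ 0 → ‖z - ζ‖ < lam →
        C / 2 * ‖z - ζ‖ ^ 2 ≤ (leviPolynomial r ζ z).re := by
  obtain ⟨c, hc, hcL⟩ := hK.exists_pos_forall_mul_sq_le
    ((hr.continuousOn_re_leviForm hU).mono (prod_mono hKU (subset_univ _)))
    (fun ζ hζ => hr.re_leviForm_real_smul hU (hKU hζ)) fun ζ hζ => hLevi ζ (hKU hζ)
  obtain ⟨lam, hlam, hball⟩ := hK.exists_pos_forall_ball_subset_norm_sub_lt hU hKU
    (f := fderiv ℝ (fderiv ℝ r)) (hr.continuousOn_fderiv_fderiv_of_isOpen hU) (half_pos hc)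
  refine ⟨c / 2, half_pos hc, lam, hlam, fun ζ hζ hrζ z _ hrz hzζ => ?_⟩
  obtain ⟨hballU, hB⟩ := hball ζ hζ
  have hsub : closedBall ζ ‖z - ζ‖ ⊆ U := (closedBall_subset_ball hzζ).trans hballU
  have htaylor := norm_sub_taylor_two_le (fun w hw => hr.hasFDerivAt_of_isOpen hU (hsub hw))
    (fun w hw => hr.hasFDerivAt_fderiv_of_isOpen hU (hsub hw))
    ((hr.contDiffAt (hU.mem_nhds (hKU hζ))).isSymmSndFDerivAt (by simp))
    (fun w hw => (hB w (closedBall_subset_ball hzζ hw)).le)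
  rw [Real.norm_eq_abs, smul_eq_mul, hrζ] at htaylor
  have hP := two_mul_re_leviPolynomial (hr.eventually_differentiableAt hU (hKU hζ))
    (hr.hasFDerivAt_fderiv_of_isOpen hU (hKU hζ)) z
  have hL := hcL ζ hζ (z - ζ)
  linarith [(abs_le.1 htaylor).1]
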